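/- (Nemirovski-type lemma, sufficiency direction in a simplified scalar form) Let t̂ ∈ ℂⁿ, B ∈ ℂ^{n×M}, β, σ² ∈ ℝ, ε > 0. If there exists ξ ≥ 0 such that the block matrix [[β − σ² − ξ, t̂ᴴ, 0], [t̂, I_n, ε B], [0, ε Bᴴ, ξ I_M]] is positive semidefinite, then for all Δ ∈ ℂᴹ with ‖Δ‖ ≤ ε the matrix [[β − σ², (t̂ + BΔ)ᴴ], [t̂ + BΔ, I_n]] is positive semidefinite, equivalently β − σ² ≥ ‖t̂ + BΔ‖². -/

import Mathlib

open Matrix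
open scoped ComplexOrder

private lemma quad_small {n : ℕ} (c : ℂ) (t : Fin n → ℂ) (a : ℂ) (v : Fin n → ℂ) :
    star (Sum.elim (fun _ : Unit => a) v) ⬝ᵥ
      (fromBlocks (of fun _ _ : Unit => c) (replicateRow Unit (star t)) (replicateCol Unit t) 1).mulVec
        (Sum.elim (fun _ => a) v)
    = (starRingEnd ℂ) a * c * a + (starRingEnd ℂ) a * (star t ⬝ᵥ v) + a * (star v ⬝ᵥ t) + star v ⬝ᵥ v := by
  have hs : star (Sum.elim (fun _ : Unit => a) v) = Sum.elim (star (fun _ : Unit => a)) (star v) := by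
    funext i; cases i <;> simp
  rw [hs, fromBlocks_mulVec, sumElim_dotProduct_sumElim]
  simp only [Matrix.mulVec, dotProduct, replicateRow, replicateCol, of_apply, Pi.star_apply, Pi.add_apply,
    one_apply, Finset.sum_add_distrib, Finset.mul_sum, Finset.sum_mul, Function.comp,
    Sum.elim_inl, Sum.elim_inr, Finset.sum_const, Finset.card_univ, Fintype.card_unit,
    one_smul, Finset.sum_ite_eq', Finset.mem_univ, if_true, RingHom.id_apply,
    mul_ite, ite_mul, mul_one, one_mul, mul_zero, zero_mul, smul_zero, Finset.sum_ite_eq,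
    mul_add, add_mul, Fintype.sum_sum_type, add_zero, zero_add]
  simp only [starRingEnd_apply, mul_comm, mul_left_comm, mul_assoc]
  ring

private lemma quad_big {n M : ℕ} (c : ℂ) (xi : ℝ) (th : Fin n → ℂ) (B : Matrix (Fin n) (Fin M) ℂ)
    (e a : ℂ) (v : Fin n → ℂ) (w : Fin M → ℂ) :
    star (Sum.elim (Sum.elim (fun _ : Unit => a) v) w) ⬝ᵥ
      (Matrix.fromBlocks
        (Matrix.fromBlocks (Matrix.of fun (_ : Unit) (_ : Unit) => c)
          (Matrix.replicateRow Unit (star th)) (Matrix.replicateCol Unit th) (1 : Matrix (Fin n) (Fin n) ℂ))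
        (Matrix.of fun (i : Unit ⊕ Fin n) (j : Fin M) =>
          Sum.elim (fun _ => (0 : ℂ)) (fun k => e * B k j) i)
        (Matrix.of fun (i : Fin M) (j : Unit ⊕ Fin n) =>
          Sum.elim (fun _ => (0 : ℂ)) (fun k => e * Bᴴ i k) j)
        (xi • (1 : Matrix (Fin M) (Fin M) ℂ))).mulVec
        (Sum.elim (Sum.elim (fun _ => a) v) w)
    = (starRingEnd ℂ) a * c * a + (starRingEnd ℂ) a * (star th ⬝ᵥ v) + a * (star v ⬝ᵥ th)
      + star v ⬝ᵥ v + e * (star v ⬝ᵥ B.mulVec w) + e * (star w ⬝ᵥ Bᴴ.mulVec v)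
      + (xi : ℂ) * (star w ⬝ᵥ w) := by
  have hs : star (Sum.elim (Sum.elim (fun _ : Unit => a) v) w)
      = Sum.elim (Sum.elim (star (fun _ : Unit => a)) (star v)) (star w) := by
    funext i; rcases i with (i|i) <;> [skip; simp] ; rcases i with (i|i) <;> simp
  rw [hs, fromBlocks_mulVec, sumElim_dotProduct_sumElim]
  simp only [Matrix.mulVec, dotProduct, replicateRow, replicateCol, of_apply, Pi.star_apply, Pi.add_apply,
    one_apply, Finset.sum_add_distrib, Finset.mul_sum, Finset.sum_mul, Function.comp,
    Sum.elim_inl, Sum.elim_inr, Finset.sum_const, Finset.card_univ, Fintype.card_unit,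
    one_smul, Finset.sum_ite_eq', Finset.mem_univ, if_true, Matrix.smul_apply, smul_eq_mul,
    mul_ite, ite_mul, mul_one, one_mul, mul_zero, zero_mul, smul_zero, Finset.sum_ite_eq,
    mul_add, add_mul, Complex.real_smul, Fintype.sum_sum_type, fromBlocks_apply₁₁, fromBlocks_apply₁₂,
    fromBlocks_apply₂₁, fromBlocks_apply₂₂, add_zero, zero_add]
  simp only [starRingEnd_apply, mul_comm, mul_left_comm, mul_assoc]
  ring

/-- Nemirovski-type lemma (sufficiency): if there is `ξ ≥ 0` such that the 3×3 block matrix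
`[[β − σ² − ξ, t̂ᴴ, 0], [t̂, I_n, ε B], [0, ε Bᴴ, ξ I_M]]` is positive semidefinite, then for
all `‖Δ‖ ≤ ε` the matrix `[[β − σ², (t̂ + BΔ)ᴴ], [t̂ + BΔ, I_n]]` is positive semidefinite,
equivalently `β − σ² ≥ ‖t̂ + BΔ‖²`. -/
theorem stmt10 (n M : ℕ) (that : EuclideanSpace ℂ (Fin n)) (B : Matrix (Fin n) (Fin M) ℂ)
    (β σ2 ε : ℝ) (hε : 0 < ε)
    (hexists : ∃ ξ : ℝ, 0 ≤ ξ ∧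
      (Matrix.fromBlocks
        (Matrix.fromBlocks (Matrix.of fun (_ : Unit) (_ : Unit) => ((β : ℂ) - σ2 - ξ))
          (Matrix.replicateRow Unit (star (that : Fin n → ℂ)))
          (Matrix.replicateCol Unit (that : Fin n → ℂ)) (1 : Matrix (Fin n) (Fin n) ℂ))
        (Matrix.of fun (i : Unit ⊕ Fin n) (j : Fin M) =>
          Sum.elim (fun _ => (0 : ℂ)) (fun k => (ε : ℂ) * B k j) i)
        (Matrix.of fun (i : Fin M) (j : Unit ⊕ Fin n) =>
          Sum.elim (fun _ => (0 : ℂ)) (fun k => (ε : ℂ) * Bᴴ i k) j)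
        (ξ • (1 : Matrix (Fin M) (Fin M) ℂ))).PosSemidef) :
    ∀ Δ : EuclideanSpace ℂ (Fin M), ‖Δ‖ ≤ ε →
      (Matrix.fromBlocks (Matrix.of fun (_ : Unit) (_ : Unit) => ((β : ℂ) - σ2))
        (Matrix.replicateRow Unit (star ((WithLp.equiv 2 (Fin n → ℂ)) that + B.mulVec Δ)))
        (Matrix.replicateCol Unit ((WithLp.equiv 2 (Fin n → ℂ)) that + B.mulVec Δ))
        (1 : Matrix (Fin n) (Fin n) ℂ)).PosSemidef ∧
      β - σ2 ≥ ‖that + (WithLp.equiv 2 (Fin n → ℂ)).symm (B.mulVec Δ)‖ ^ 2 := by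
  obtain ⟨ξ, hξ0, hP⟩ := hexists
  intro Δ hΔ
  set th : Fin n → ℂ := (that : Fin n → ℂ) with hth
  set Δf : Fin M → ℂ := (Δ : Fin M → ℂ) with hΔf
  set t : Fin n → ℂ := (WithLp.equiv 2 (Fin n → ℂ)) that + B.mulVec Δ with htdef
  have ht : t = th + B.mulVec Δf := rfl
  have hεne : (ε : ℂ) ≠ 0 := by exact_mod_cast hε.ne'
  -- dot product of star Δf with itself is the norm squared
  have hdd : star Δf ⬝ᵥ Δf = ((‖Δ‖ ^ 2 : ℝ) : ℂ) := by
    have h2 : ‖Δ‖ ^ 2 = ∑ i, Complex.normSq (Δ i) := by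
      rw [EuclideanSpace.norm_eq, Real.sq_sqrt (by positivity)]
      simp [Complex.sq_norm]
    rw [h2]
    push_cast
    simp only [dotProduct, Pi.star_apply]
    exact Finset.sum_congr rfl fun i _ => by
      rw [Complex.normSq_eq_conj_mul_self]; rfl
  -- swap lemma
  have hswap : ∀ v : Fin n → ℂ, star Δf ⬝ᵥ Bᴴ.mulVec v = star (B.mulVec Δf) ⬝ᵥ v := by
    intro v
    simp only [dotProduct, Matrix.mulVec, dotProduct, conjTranspose_apply, Pi.star_apply,
      Finset.mul_sum, Finset.sum_mul, star_sum, star_mul']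
    rw [Finset.sum_comm]
    refine Finset.sum_congr rfl fun i _ => Finset.sum_congr rfl fun j _ => by
      ring
  -- nonnegativity of the small quadratic form
  have hsmall : ∀ (a : ℂ) (v : Fin n → ℂ),
      0 ≤ (starRingEnd ℂ) a * ((β : ℂ) - σ2) * a + (starRingEnd ℂ) a * (star t ⬝ᵥ v)
        + a * (star v ⬝ᵥ t) + star v ⬝ᵥ v := by
    intro a v
    set w : Fin M → ℂ := (a / ε) • Δf with hw
    have hbig := hP.dotProduct_mulVec_nonneg (Sum.elim (Sum.elim (fun _ : Unit => a) v) w)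
    rw [quad_big] at hbig
    have hterm : (0 : ℂ) ≤ ((ξ * Complex.normSq a * (1 - ‖Δ‖ ^ 2 / ε ^ 2) : ℝ) : ℂ) := by
      rw [Complex.zero_le_real]
      have h1 : ‖Δ‖ ^ 2 / ε ^ 2 ≤ 1 := by
        rw [div_le_one (by positivity)]
        exact pow_le_pow_left₀ (norm_nonneg _) hΔ 2
      have h2 := Complex.normSq_nonneg a
      have h3 : 0 ≤ 1 - ‖Δ‖ ^ 2 / ε ^ 2 := by linarith
      positivity
    refine le_trans (add_nonneg hbig hterm) (le_of_eq ?_)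
    rw [ht]
    have e1 : star (th + B.mulVec Δf) ⬝ᵥ v = star th ⬝ᵥ v + star (B.mulVec Δf) ⬝ᵥ v := by
      rw [star_add, add_dotProduct]
    have e2 : star v ⬝ᵥ (th + B.mulVec Δf) = star v ⬝ᵥ th + star v ⬝ᵥ B.mulVec Δf := by
      rw [dotProduct_add]
    rw [e1, e2, hw]
    have e3 : B.mulVec ((a / ε) • Δf) = (a / ε) • B.mulVec Δf := by
      rw [Matrix.mulVec_smul]
    have e4 : star ((a / ε) • Δf) = (starRingEnd ℂ) (a / ε) • star Δf := by
      funext i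
      simp only [Pi.smul_apply, Pi.star_apply, smul_eq_mul, star_mul', starRingEnd_apply]
    rw [e3, e4, dotProduct_smul, smul_dotProduct, smul_dotProduct, smul_eq_mul, smul_eq_mul,
      smul_eq_mul, dotProduct_smul, smul_eq_mul, hswap, hdd]
    have hca : (starRingEnd ℂ) a * a = ((Complex.normSq a : ℝ) : ℂ) := by
      rw [Complex.normSq_eq_conj_mul_self]
    have hconj : (starRingEnd ℂ) (a / ε) = (starRingEnd ℂ) a / ε := by
      rw [map_div₀, Complex.conj_ofReal]
    rw [hconj]
    push_cast
    field_simp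
    ring_nf
    rw [← hca]
    ring
  constructor
  · refine Matrix.PosSemidef.of_dotProduct_mulVec_nonneg ?_ ?_
    · show _ᴴ = _
      have hA : (Matrix.of fun (_ : Unit) (_ : Unit) => ((β : ℂ) - σ2))ᴴ
          = Matrix.of fun (_ : Unit) (_ : Unit) => ((β : ℂ) - σ2) := by
        ext i j
        simp only [conjTranspose_apply, of_apply]
        rw [show ((β : ℂ) - σ2) = ((β - σ2 : ℝ) : ℂ) by push_cast; ring]
        exact Complex.conj_ofReal _
      rw [fromBlocks_conjTranspose, conjTranspose_replicateCol, conjTranspose_replicateRow, star_star,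
        conjTranspose_one, hA]
    · intro x
      have hx : x = Sum.elim (fun _ : Unit => x (Sum.inl ())) (fun i => x (Sum.inr i)) := by
        funext i; rcases i with (i|i); · cases i; rfl
        · rfl
      rw [hx, quad_small]
      exact hsmall _ _
  · have h := hsmall 1 (-t)
    have e5 : star (-t) = -(star t) := by funext i; simp
    rw [e5] at h
    simp only [_root_.map_one, one_mul, mul_one, dotProduct_neg, neg_dotProduct, neg_neg] at h
    set T : EuclideanSpace ℂ (Fin n) := that + (WithLp.equiv 2 (Fin n → ℂ)).symm (B.mulVec Δ) with hT
    have htt : star t ⬝ᵥ t = ((‖T‖ ^ 2 : ℝ) : ℂ) := by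
      have h2 : ‖T‖ ^ 2 = ∑ i, Complex.normSq (T i) := by
        rw [EuclideanSpace.norm_eq, Real.sq_sqrt (by positivity)]
        simp [Complex.sq_norm]
      rw [h2]
      push_cast
      simp only [dotProduct, Pi.star_apply]
      exact Finset.sum_congr rfl fun i _ => by
        rw [Complex.normSq_eq_conj_mul_self]; rfl
    rw [htt] at h
    have h' : (0 : ℂ) ≤ (((β - σ2) - ‖T‖ ^ 2 : ℝ) : ℂ) := by
      push_cast
      convert h using 1
      push_cast
      ring
    rw [Complex.zero_le_real] at h'
    linarith
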